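/- (Saddle-point characterization of TV/L1 solutions.) Let V be the space of real m×n matrices and W the space of real p×q matrices, both with the Frobenius inner product. Let H : V → V and L : V → W be linear maps, B ∈ V, F(R) = ‖R − B‖_{1,1} = Σ_{i,j}|R_{ij} − B_{ij}| for R ∈ V, and let G : W → ℝ be convex. Fix β > 0, ρ > 0 and define L_{β,ρ}(X,R,Y,Z,W') = F(R) + G(Y) + (β/2)‖L(X) − Y‖_F² + ⟨L(X) − Y, Z⟩_F + (ρ/2)‖H(X) − R‖_F² + ⟨H(X) − R, W'⟩_F. Then X* minimizes X ↦ F(H(X)) + G(L(X)) over V if and only if there exist R* ∈ V, Y* ∈ W, Z* ∈ W and W'* ∈ V such that (X*,R*,Y*,Z*,W'*) is a saddle point of L_{β,ρ}, i.e. L_{β,ρ}(X*,R*,Y*,Z,W') ≤ L_{β,ρ}(X*,R*,Y*,Z*,W'*) ≤ L_{β,ρ}(X,R,Y,Z*,W'*) for all X, R ∈ V, Y, Z ∈ W, W' ∈ V. -/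

import Mathlib

/-
Only the forward direction has content; backwards, the saddle inequality in the multipliers
forces `R* = H X*` and `Y* = L X*`, and the other one is then the minimality of `X*`.
Forwards, put `R* = H X*`, `Y* = L X*`. Since the quadratic penalties are nonnegative it suffices
to find multipliers for the ordinary Lagrangian, i.e. a linear `ℓ` with
`F (H X*) + G (L X*) ≤ F R + G Y + ℓ (H X - R, L X - Y)` for all `X, R, Y`. These come from
separating the point `(0, 0, F (H X*) + G (L X*))` from the open convex set of all `(d, t)` with
`F (H X - d₁) + G (L X - d₂) < t` for some `X`; openness uses that a finite convex function on a
finite-dimensional space is continuous.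
-/

open Matrix

/-- Frobenius inner product on real matrices. -/
noncomputable def fip {m n : ℕ} (A B : Matrix (Fin m) (Fin n) ℝ) : ℝ :=
  (Aᵀ * B).trace

/-- Frobenius norm on real matrices. -/
noncomputable def fnorm {m n : ℕ} (A : Matrix (Fin m) (Fin n) ℝ) : ℝ :=
  Real.sqrt (fip A A)

/-- The augmented Lagrangian `L_{β,ρ}(X,R,Y,Z,W')` for the TV/L1 model. -/
noncomputable def lag5 {m n p q : ℕ}
    (H : Matrix (Fin m) (Fin n) ℝ →ₗ[ℝ] Matrix (Fin m) (Fin n) ℝ)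
    (L : Matrix (Fin m) (Fin n) ℝ →ₗ[ℝ] Matrix (Fin p) (Fin q) ℝ)
    (F : Matrix (Fin m) (Fin n) ℝ → ℝ) (G : Matrix (Fin p) (Fin q) ℝ → ℝ)
    (β ρ : ℝ)
    (X R : Matrix (Fin m) (Fin n) ℝ) (Y Z : Matrix (Fin p) (Fin q) ℝ)
    (W' : Matrix (Fin m) (Fin n) ℝ) : ℝ :=
  F R + G Y + β / 2 * (fnorm (L X - Y)) ^ 2 + fip (L X - Y) Z
    + ρ / 2 * (fnorm (H X - R)) ^ 2 + fip (H X - R) W'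

/-- Saddle point of the five-variable augmented Lagrangian. -/
def IsSaddle5 {m n p q : ℕ}
    (Φ : Matrix (Fin m) (Fin n) ℝ → Matrix (Fin m) (Fin n) ℝ →
      Matrix (Fin p) (Fin q) ℝ → Matrix (Fin p) (Fin q) ℝ →
      Matrix (Fin m) (Fin n) ℝ → ℝ)
    (Xs Rs : Matrix (Fin m) (Fin n) ℝ) (Ys Zs : Matrix (Fin p) (Fin q) ℝ)
    (Ws : Matrix (Fin m) (Fin n) ℝ) : Prop :=
  ∀ X R Y Z W', Φ Xs Rs Ys Z W' ≤ Φ Xs Rs Ys Zs Ws ∧ Φ Xs Rs Ys Zs Ws ≤ Φ X R Y Zs Ws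

open Set

section Frobenius

variable {m n : ℕ}

theorem fip_eq_sum (A B : Matrix (Fin m) (Fin n) ℝ) : fip A B = ∑ i, ∑ j, A i j * B i j := by
  rw [fip, Matrix.trace]
  simp only [Matrix.diag, Matrix.mul_apply, Matrix.transpose_apply]
  exact Finset.sum_comm

theorem fip_smul_right (A B : Matrix (Fin m) (Fin n) ℝ) (t : ℝ) : fip A (t • B) = t * fip A B := by
  simp [fip, Matrix.mul_smul, Matrix.trace_smul]

theorem fip_self_eq_zero_iff {A : Matrix (Fin m) (Fin n) ℝ} : fip A A = 0 ↔ A = 0 := by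
  simpa [fip] using Matrix.trace_conjTranspose_mul_self_eq_zero_iff (A := A)

theorem eq_zero_of_forall_fip_le {A : Matrix (Fin m) (Fin n) ℝ} {c : ℝ} (h : ∀ Z, fip A Z ≤ c) :
    A = 0 := by
  refine fip_self_eq_zero_iff.1 (by_contra fun hA => ?_)
  have hc := h (((c + 1) / fip A A) • A)
  rw [fip_smul_right, div_mul_cancel₀ _ hA] at hc
  linarith

theorem exists_fip_eq (g : Matrix (Fin m) (Fin n) ℝ →ₗ[ℝ] ℝ) :
    ∃ Z, ∀ A, g A = fip A Z := by
  refine ⟨Matrix.of fun i j => g (Matrix.single i j 1), fun A => ?_⟩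
  conv_lhs => rw [Matrix.matrix_eq_sum_single A]
  simp only [map_sum, fip_eq_sum, Matrix.of_apply]
  refine Finset.sum_congr rfl fun i _ => Finset.sum_congr rfl fun j _ => ?_
  rw [← smul_eq_mul, ← map_smul, Matrix.smul_single, smul_eq_mul, mul_one]

end Frobenius

theorem convexOn_univ_sum_abs_sub {ι κ : Type*} [Fintype ι] [Fintype κ] (B : Matrix ι κ ℝ) :
    ConvexOn ℝ univ fun R : Matrix ι κ ℝ => ∑ i, ∑ j, |R i j - B i j| := by
  refine ⟨convex_univ, fun R _ S _ a b ha hb hab => ?_⟩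
  simp only [smul_eq_mul, Finset.mul_sum, ← Finset.sum_add_distrib, Matrix.add_apply,
    Matrix.smul_apply]
  gcongr with i _ j _
  calc |a * R i j + b * S i j - B i j| = |a * (R i j - B i j) + b * (S i j - B i j)| := by
        congr 1; linear_combination (B i j) * hab
    _ ≤ a * |R i j - B i j| + b * |S i j - B i j| := by
        grw [abs_add_le, abs_mul, abs_mul, abs_of_nonneg ha, abs_of_nonneg hb]

section Multiplier

variable {E V : Type*} [AddCommGroup E] [Module ℝ E] [AddCommGroup V] [Module ℝ V]

theorem ConvexOn.convex_setOf_exists_comp_sub_lt {φ : V → ℝ} (hφ : ConvexOn ℝ univ φ)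
    (A : E →ₗ[ℝ] V) : Convex ℝ {p : V × ℝ | ∃ x, φ (A x - p.1) < p.2} := by
  let ψ : E × V →ₗ[ℝ] V := A.coprod (-LinearMap.id)
  have hS : {p : V × ℝ | ∃ x, φ (A x - p.1) < p.2} =
      (LinearMap.snd ℝ E V).prodMap (LinearMap.id : ℝ →ₗ[ℝ] ℝ) ''
        {q | q.1 ∈ ψ ⁻¹' univ ∧ (φ ∘ ψ) q.1 < q.2} := by
    ext ⟨d, t⟩
    simp [ψ, sub_eq_add_neg]
  rw [hS]
  exact (hφ.comp_linearMap ψ).convex_strict_epigraph.linear_image _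

variable [TopologicalSpace V] [IsTopologicalAddGroup V] [ContinuousSMul ℝ V]

theorem ConvexOn.exists_multiplier_of_forall_le_comp {φ : V → ℝ} (hφ : ConvexOn ℝ univ φ)
    (hφc : Continuous φ) (A : E →ₗ[ℝ] V) {x₀ : E} (hmin : ∀ x, φ (A x₀) ≤ φ (A x)) :
    ∃ ℓ : StrongDual ℝ V, ∀ x u, φ (A x₀) ≤ φ u + ℓ (A x - u) := by
  set S : Set (V × ℝ) := {p | ∃ x, φ (A x - p.1) < p.2}
  have hS_open : IsOpen S := by
    have hS : S = ⋃ x, {p | φ (A x - p.1) < p.2} := by ext; simp [S]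
    rw [hS]
    exact isOpen_iUnion fun x => isOpen_lt (by fun_prop) continuous_snd
  have hmem : ∀ x u t, φ u < t → (A x - u, t) ∈ S := fun x u t h => ⟨x, by simpa using h⟩
  have hnot : ((0 : V), φ (A x₀)) ∉ S := by
    rintro ⟨x, hx⟩
    simp only [sub_zero] at hx
    exact (hx.trans_le (hmin x)).false
  obtain ⟨f, hf⟩ :=
    geometric_hahn_banach_open_point (hφ.convex_setOf_exists_comp_sub_lt A) hS_open hnot
  have hf_split : ∀ d t, f (d, t) = f (d, 0) + t * f (0, 1) := by
    intro d t
    rw [← smul_eq_mul, ← map_smul, ← map_add]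
    simp
  set κ := f (0, 1)
  have hκ : κ < 0 := by
    have h := hf _ (hmem x₀ (A x₀) (φ (A x₀) + 1) (lt_add_one _))
    rw [hf_split, hf_split (0 : V)] at h
    simp only [sub_self] at h
    linarith
  refine ⟨κ⁻¹ • f.comp (ContinuousLinearMap.inl ℝ V ℝ), fun x u => ?_⟩
  suffices φ (A x₀) - f (A x - u, 0) / κ ≤ φ u by
    simpa [div_eq_inv_mul, sub_le_iff_le_add'] using this
  refine le_of_forall_gt_imp_ge_of_dense fun t ht => ?_
  have h := hf _ (hmem x u t ht)
  rw [hf_split, hf_split (0 : V), Prod.mk_zero_zero, map_zero, zero_add] at h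
  have : φ (A x₀) - t < f (A x - u, 0) / κ := (lt_div_iff_of_neg hκ).2 (by linarith)
  linarith

end Multiplier

section Saddle

attribute [local instance] Matrix.normedAddCommGroup Matrix.normedSpace

variable {m n p q : ℕ}
  (H : Matrix (Fin m) (Fin n) ℝ →ₗ[ℝ] Matrix (Fin m) (Fin n) ℝ)
  (L : Matrix (Fin m) (Fin n) ℝ →ₗ[ℝ] Matrix (Fin p) (Fin q) ℝ)
  {F : Matrix (Fin m) (Fin n) ℝ → ℝ} {G : Matrix (Fin p) (Fin q) ℝ → ℝ} {β ρ : ℝ}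

theorem lag5_apply_self (X : Matrix (Fin m) (Fin n) ℝ) (Z : Matrix (Fin p) (Fin q) ℝ)
    (W' : Matrix (Fin m) (Fin n) ℝ) :
    lag5 H L F G β ρ X (H X) (L X) Z W' = F (H X) + G (L X) := by
  simp [lag5, fnorm, fip]

variable {H L}

theorem IsSaddle5.forall_le {Xs Rs : Matrix (Fin m) (Fin n) ℝ} {Ys Zs : Matrix (Fin p) (Fin q) ℝ}
    {Ws : Matrix (Fin m) (Fin n) ℝ} (hsad : IsSaddle5 (lag5 H L F G β ρ) Xs Rs Ys Zs Ws) :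
    ∀ X, F (H Xs) + G (L Xs) ≤ F (H X) + G (L X) := by
  have hR : H Xs - Rs = 0 := eq_zero_of_forall_fip_le (c := fip (H Xs - Rs) Ws) fun W' => by
    have h := (hsad Xs Rs Ys Zs W').1
    simp only [lag5] at h
    linarith
  have hY : L Xs - Ys = 0 := eq_zero_of_forall_fip_le (c := fip (L Xs - Ys) Zs) fun Z => by
    have h := (hsad Xs Rs Ys Z Ws).1
    simp only [lag5] at h
    linarith
  obtain rfl : Rs = H Xs := (sub_eq_zero.1 hR).symm
  obtain rfl : Ys = L Xs := (sub_eq_zero.1 hY).symm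
  intro X
  simpa only [lag5_apply_self] using (hsad X (H X) (L X) Zs Ws).2

theorem exists_isSaddle5_of_forall_le (hF : ConvexOn ℝ univ F) (hG : ConvexOn ℝ univ G)
    (hβ : 0 ≤ β) (hρ : 0 ≤ ρ) {Xs : Matrix (Fin m) (Fin n) ℝ}
    (hmin : ∀ X, F (H Xs) + G (L Xs) ≤ F (H X) + G (L X)) :
    ∃ (Rs : Matrix (Fin m) (Fin n) ℝ) (Ys Zs : Matrix (Fin p) (Fin q) ℝ)
      (Ws : Matrix (Fin m) (Fin n) ℝ), IsSaddle5 (lag5 H L F G β ρ) Xs Rs Ys Zs Ws := by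
  let φ : Matrix (Fin m) (Fin n) ℝ × Matrix (Fin p) (Fin q) ℝ → ℝ := fun u => F u.1 + G u.2
  have hφ : ConvexOn ℝ univ φ :=
    (hF.comp_linearMap (LinearMap.fst ℝ _ _)).add (hG.comp_linearMap (LinearMap.snd ℝ _ _))
  obtain ⟨ℓ, hℓ⟩ := hφ.exists_multiplier_of_forall_le_comp
    (continuousOn_univ.1 (hφ.continuousOn isOpen_univ)) (H.prod L) hmin
  obtain ⟨Ws, hWs⟩ := exists_fip_eq (ℓ.toLinearMap ∘ₗ LinearMap.inl ℝ _ _)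
  obtain ⟨Zs, hZs⟩ := exists_fip_eq (ℓ.toLinearMap ∘ₗ LinearMap.inr ℝ _ _)
  refine ⟨H Xs, L Xs, Zs, Ws, fun X R Y Z W' => ⟨by rw [lag5_apply_self, lag5_apply_self], ?_⟩⟩
  have hsplit : ℓ (H.prod L X - (R, Y)) = fip (H X - R) Ws + fip (L X - Y) Zs := by
    rw [← hWs, ← hZs]
    simp [← map_add]
  have hmult : F (H Xs) + G (L Xs) ≤ F R + G Y + ℓ (H.prod L X - (R, Y)) := hℓ X (R, Y)
  rw [hsplit] at hmult
  rw [lag5_apply_self, lag5]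
  have : 0 ≤ β / 2 * fnorm (L X - Y) ^ 2 + ρ / 2 * fnorm (H X - R) ^ 2 := by positivity
  linarith

end Saddle

theorem stmt12 {m n p q : ℕ}
    (H : Matrix (Fin m) (Fin n) ℝ →ₗ[ℝ] Matrix (Fin m) (Fin n) ℝ)
    (L : Matrix (Fin m) (Fin n) ℝ →ₗ[ℝ] Matrix (Fin p) (Fin q) ℝ)
    (B : Matrix (Fin m) (Fin n) ℝ)
    (F : Matrix (Fin m) (Fin n) ℝ → ℝ)
    (hFdef : ∀ R, F R = ∑ i, ∑ j, |R i j - B i j|)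
    (G : Matrix (Fin p) (Fin q) ℝ → ℝ) (hG : ConvexOn ℝ Set.univ G)
    (β ρ : ℝ) (hβ : 0 < β) (hρ : 0 < ρ)
    (Xs : Matrix (Fin m) (Fin n) ℝ) :
    (∀ X, F (H Xs) + G (L Xs) ≤ F (H X) + G (L X)) ↔
    ∃ (Rs : Matrix (Fin m) (Fin n) ℝ) (Ys Zs : Matrix (Fin p) (Fin q) ℝ)
      (Ws : Matrix (Fin m) (Fin n) ℝ),
      IsSaddle5 (lag5 H L F G β ρ) Xs Rs Ys Zs Ws := by
  have hF : ConvexOn ℝ univ F := funext hFdef ▸ convexOn_univ_sum_abs_sub B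
  exact ⟨exists_isSaddle5_of_forall_le hF hG hβ.le hρ.le,
    fun ⟨_, _, _, _, hsad⟩ => hsad.forall_le⟩
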